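/- arXiv:1806.02978 — 3 statements merged into one kernel-verified Lean document; each statement's English description precedes it below -/
import Mathlib

section
/- Let (X, 𝒜, μ) be a σ-finite measure space, let n ≥ 1, and let f₁, …, fₙ : X → [0,∞) be measurable probability densities with respect to μ (i.e., ∫ fₖ dμ = 1 for each k). Then for every measurable function g : X → Δⁿ⁻¹ taking values in the probability simplex (g(x)ₖ ≥ 0, Σₖ g(x)ₖ = 1), one has Σₖ ∫ fₖ(x) · log(g(x)ₖ) dμ(x) ≤ Σₖ ∫ fₖ(x) · log( fₖ(x) / Σⱼ fⱼ(x) ) dμ(x), with the conventions 0·log 0 = 0 and integrands set to 0 where Σⱼ fⱼ(x) = 0. The bound is attained by the critic g*(x)ₖ = fₖ(x) / Σⱼ fⱼ(x) (defined arbitrarily as a point of the simplex where Σⱼ fⱼ(x) = 0). -/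
open MeasureTheory
open scoped ENNReal BigOperators

/-- The negated critic objective `∑ₖ ∫ -fₖ(x) · log(g(x)ₖ) dμ`, computed as a sum of
lower (ENNReal-valued) integrals.  Since `g(x)ₖ ∈ [0,1]`, each integrand
`fₖ(x) · log(g(x)ₖ)` is nonpositive, so negating it yields a nonnegative extended-real
integrand.  The conventions are `0 · log 0 = 0` (a point with `fₖ(x) = 0` contributes `0`)
and `fₖ(x) · log 0 = -∞` (i.e. `∞` after negation) when `fₖ(x) > 0`. -/
noncomputable def negCriticObjective {X : Type*} [MeasurableSpace X] (μ : Measure X)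
    {n : ℕ} (f : Fin n → X → ℝ) (g : X → Fin n → ℝ) : ℝ≥0∞ :=
  ∑ k, ∫⁻ x,
    (if f k x = 0 then 0
     else if g x k = 0 then ⊤
     else ENNReal.ofReal (-(f k x * Real.log (g x k)))) ∂μ

/-- The negation of `∑ₖ ∫ fₖ(x) · log(fₖ(x) / ∑ⱼ fⱼ(x)) dμ`, with the conventions
`0 · log 0 = 0` and the integrand set to `0` where `∑ⱼ fⱼ(x) = 0`. -/
noncomputable def negOptimalValue {X : Type*} [MeasurableSpace X] (μ : Measure X)
    {n : ℕ} (f : Fin n → X → ℝ) : ℝ≥0∞ :=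
  ∑ k, ∫⁻ x,
    (if f k x = 0 then 0
     else if (∑ j, f j x) = 0 then 0
     else ENNReal.ofReal (-(f k x * Real.log (f k x / ∑ j, f j x)))) ∂μ

/-- Optimal softmax critic for a family of densities: `g*(x)ₖ = fₖ(x) / ∑ⱼ fⱼ(x)`,
defined as the uniform point of the simplex where `∑ⱼ fⱼ(x) = 0`. -/
noncomputable def optimalCritic {X : Type*} {n : ℕ} (f : Fin n → X → ℝ) :
    X → Fin n → ℝ :=
  fun x k => if (∑ j, f j x) = 0 then (n : ℝ)⁻¹ else f k x / ∑ j, f j x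

lemma gibbs_real {n : ℕ} (a g : Fin n → ℝ) (ha : ∀ k, 0 ≤ a k) (hg : ∀ k, 0 ≤ g k)
    (hg1 : ∑ k, g k = 1) (hga : ∀ k, a k ≠ 0 → g k ≠ 0) :
    ∑ k, (if a k = 0 then (0:ℝ) else a k * Real.log (g k))
      ≤ ∑ k, (if a k = 0 then (0:ℝ) else a k * Real.log (a k / ∑ j, a j)) := by
  set s := ∑ j, a j with hs
  have hs0 : 0 ≤ s := Finset.sum_nonneg fun j _ => ha j
  rw [← sub_nonpos, ← Finset.sum_sub_distrib]
  have hbound : ∀ k ∈ Finset.univ, ((if a k = 0 then (0:ℝ) else a k * Real.log (g k)) -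
      (if a k = 0 then (0:ℝ) else a k * Real.log (a k / s))) ≤ g k * s - a k := by
    intro k _
    by_cases hak : a k = 0
    · simp [hak, mul_nonneg (hg k) hs0]
    · have hak' : 0 < a k := lt_of_le_of_ne (ha k) (Ne.symm hak)
      have hsk : a k ≤ s := Finset.single_le_sum (fun j _ => ha j) (Finset.mem_univ k)
      have hspos : 0 < s := lt_of_lt_of_le hak' hsk
      have hgk : 0 < g k := lt_of_le_of_ne (hg k) (Ne.symm (hga k hak))
      rw [if_neg hak, if_neg hak]
      have ht : 0 < g k * s / a k := div_pos (mul_pos hgk hspos) hak'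
      have hlog : Real.log (g k * s / a k) ≤ g k * s / a k - 1 :=
        Real.log_le_sub_one_of_pos ht
      have heq : a k * Real.log (g k) - a k * Real.log (a k / s)
          = a k * Real.log (g k * s / a k) := by
        rw [Real.log_div (mul_pos hgk hspos).ne' hak'.ne',
          Real.log_mul hgk.ne' hspos.ne', Real.log_div hak'.ne' hspos.ne']
        ring
      rw [heq]
      calc a k * Real.log (g k * s / a k) ≤ a k * (g k * s / a k - 1) :=
            mul_le_mul_of_nonneg_left hlog (ha k)
        _ = g k * s - a k := by field_simp
  calc ∑ k, ((if a k = 0 then (0:ℝ) else a k * Real.log (g k)) -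
        (if a k = 0 then (0:ℝ) else a k * Real.log (a k / s)))
      ≤ ∑ k, (g k * s - a k) := Finset.sum_le_sum hbound
    _ = 0 := by
        rw [Finset.sum_sub_distrib, ← Finset.sum_mul, hg1, one_mul, ← hs, sub_self]

lemma pointwise_le {n : ℕ} (a g : Fin n → ℝ) (ha : ∀ k, 0 ≤ a k) (hg : ∀ k, 0 ≤ g k)
    (hg1 : ∑ k, g k = 1) :
    ∑ k, (if a k = 0 then (0:ℝ≥0∞)
          else if (∑ j, a j) = 0 then 0
          else ENNReal.ofReal (-(a k * Real.log (a k / ∑ j, a j))))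
      ≤ ∑ k, (if a k = 0 then (0:ℝ≥0∞)
          else if g k = 0 then ⊤
          else ENNReal.ofReal (-(a k * Real.log (g k)))) := by
  by_cases hex : ∃ k, a k ≠ 0 ∧ g k = 0
  · obtain ⟨k, hak, hgk⟩ := hex
    have : (if a k = 0 then (0:ℝ≥0∞) else if g k = 0 then ⊤
        else ENNReal.ofReal (-(a k * Real.log (g k)))) = ⊤ := by simp [hak, hgk]
    have htop : (⊤:ℝ≥0∞) ≤ ∑ k, (if a k = 0 then (0:ℝ≥0∞) else if g k = 0 then ⊤
        else ENNReal.ofReal (-(a k * Real.log (g k)))) := by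
      exact le_trans (le_of_eq this.symm) <| Finset.single_le_sum (f := fun k => (if a k = 0 then (0:ℝ≥0∞) else if g k = 0 then ⊤ else ENNReal.ofReal (-(a k * Real.log (g k))))) (fun i _ => zero_le) (Finset.mem_univ k)
    exact le_trans le_top htop
  · push_neg at hex
    set s := ∑ j, a j with hs
    by_cases hs0 : s = 0
    · have : ∀ k, (if a k = 0 then (0:ℝ≥0∞) else if s = 0 then 0
          else ENNReal.ofReal (-(a k * Real.log (a k / s)))) = 0 := by
        intro k; by_cases hak : a k = 0 <;> simp [hak, hs0]
      calc ∑ k, (if a k = 0 then (0:ℝ≥0∞) else if s = 0 then 0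
            else ENNReal.ofReal (-(a k * Real.log (a k / s)))) = 0 := by
            simp only [this, Finset.sum_const_zero]
        _ ≤ _ := zero_le
    · have hspos : 0 < s := lt_of_le_of_ne (Finset.sum_nonneg fun j _ => ha j) (Ne.symm hs0)
      have hL : ∀ k, (if a k = 0 then (0:ℝ≥0∞) else if s = 0 then 0
          else ENNReal.ofReal (-(a k * Real.log (a k / s))))
          = ENNReal.ofReal (if a k = 0 then (0:ℝ) else -(a k * Real.log (a k / s))) := by
        intro k; by_cases hak : a k = 0 <;> simp [hak, hs0]
      have hR : ∀ k, (if a k = 0 then (0:ℝ≥0∞) else if g k = 0 then ⊤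
          else ENNReal.ofReal (-(a k * Real.log (g k))))
          = ENNReal.ofReal (if a k = 0 then (0:ℝ) else -(a k * Real.log (g k))) := by
        intro k; by_cases hak : a k = 0
        · simp [hak]
        · simp [hak, hex k hak]
      simp only [hL, hR]
      have hLnn : ∀ k ∈ Finset.univ, (0:ℝ) ≤ (if a k = 0 then (0:ℝ) else -(a k * Real.log (a k / s))) := by
        intro k _
        by_cases hak : a k = 0
        · simp [hak]
        · rw [if_neg hak]
          have hsk : a k ≤ s := Finset.single_le_sum (fun j _ => ha j) (Finset.mem_univ k)
          have : Real.log (a k / s) ≤ 0 :=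
            Real.log_nonpos (div_nonneg (ha k) hspos.le) ((div_le_one hspos).mpr hsk)
          exact neg_nonneg.2 (mul_nonpos_iff.2 (Or.inl ⟨ha k, this⟩))
      have hRnn : ∀ k ∈ Finset.univ, (0:ℝ) ≤ (if a k = 0 then (0:ℝ) else -(a k * Real.log (g k))) := by
        intro k _
        by_cases hak : a k = 0
        · simp [hak]
        · rw [if_neg hak]
          have hgk1 : g k ≤ 1 := by
            rw [← hg1]
            exact Finset.single_le_sum (fun j _ => hg j) (Finset.mem_univ k)
          have : Real.log (g k) ≤ 0 := Real.log_nonpos (hg k) hgk1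
          exact neg_nonneg.2 (mul_nonpos_iff.2 (Or.inl ⟨ha k, this⟩))
      rw [← ENNReal.ofReal_sum_of_nonneg hLnn, ← ENNReal.ofReal_sum_of_nonneg hRnn]
      apply ENNReal.ofReal_le_ofReal
      have hneg : ∀ (c : Prop) [Decidable c] (x : ℝ),
          (if c then (0:ℝ) else -x) = -(if c then (0:ℝ) else x) := by
        intro c _ x; split <;> simp
      simp only [hneg]
      rw [Finset.sum_neg_distrib, Finset.sum_neg_distrib, neg_le_neg_iff]
      exact gibbs_real a g ha hg hg1 hex

/-- For probability densities `f₁, …, fₙ` with respect to a σ-finite measure `μ` and any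
measurable simplex-valued critic `g`, one has
`∑ₖ ∫ fₖ log(g(·)ₖ) dμ ≤ ∑ₖ ∫ fₖ log(fₖ / ∑ⱼ fⱼ) dμ`
(stated equivalently, after negating both nonpositive sides, as an inequality between
sums of lower integrals), and the bound is attained by the critic
`g*(x)ₖ = fₖ(x) / ∑ⱼ fⱼ(x)` (taken to be a point of the simplex where `∑ⱼ fⱼ(x) = 0`),
which is itself measurable and simplex-valued. -/
theorem optimal_softmax_critic {X : Type*} [MeasurableSpace X] (μ : Measure X)
    [SigmaFinite μ] (n : ℕ) (hn : 1 ≤ n)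
    (f : Fin n → X → ℝ) (hf_meas : ∀ k, Measurable (f k))
    (hf_nonneg : ∀ k x, 0 ≤ f k x)
    (hf_prob : ∀ k, ∫ x, f k x ∂μ = 1) :
    (∀ g : X → Fin n → ℝ, Measurable g → (∀ x k, 0 ≤ g x k) →
        (∀ x, ∑ k, g x k = 1) →
        negOptimalValue μ f ≤ negCriticObjective μ f g) ∧
    Measurable (optimalCritic f) ∧
    (∀ x k, 0 ≤ optimalCritic f x k) ∧
    (∀ x, ∑ k, optimalCritic f x k = 1) ∧
    negCriticObjective μ f (optimalCritic f) = negOptimalValue μ f := by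
  have hsum_meas : Measurable (fun x => ∑ j, f j x) :=
    Finset.measurable_sum _ fun j _ => hf_meas j
  refine ⟨?_, ?_, ?_, ?_, ?_⟩
  · intro g hg hg0 hg1
    unfold negOptimalValue negCriticObjective
    have hmL : ∀ k ∈ Finset.univ, Measurable (fun x =>
        (if f k x = 0 then (0:ℝ≥0∞)
         else if (∑ j, f j x) = 0 then 0
         else ENNReal.ofReal (-(f k x * Real.log (f k x / ∑ j, f j x))))) := by
      intro k _
      apply Measurable.ite ((hf_meas k) (measurableSet_singleton 0)) measurable_const
      apply Measurable.ite (hsum_meas (measurableSet_singleton 0)) measurable_const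
      exact ENNReal.measurable_ofReal.comp
        (((hf_meas k).mul (Real.measurable_log.comp ((hf_meas k).div hsum_meas))).neg)
    have hmR : ∀ k ∈ Finset.univ, Measurable (fun x =>
        (if f k x = 0 then (0:ℝ≥0∞)
         else if g x k = 0 then ⊤
         else ENNReal.ofReal (-(f k x * Real.log (g x k))))) := by
      intro k _
      have hgk : Measurable (fun x => g x k) := (measurable_pi_apply k).comp hg
      apply Measurable.ite ((hf_meas k) (measurableSet_singleton 0)) measurable_const
      apply Measurable.ite (hgk (measurableSet_singleton 0)) measurable_const
      exact ENNReal.measurable_ofReal.comp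
        (((hf_meas k).mul (Real.measurable_log.comp hgk)).neg)
    rw [← lintegral_finset_sum _ hmL, ← lintegral_finset_sum _ hmR]
    apply lintegral_mono
    intro x
    exact pointwise_le (fun k => f k x) (fun k => g x k) (fun k => hf_nonneg k x)
      (fun k => hg0 x k) (hg1 x)
  · apply measurable_pi_lambda
    intro k
    exact Measurable.ite (hsum_meas (measurableSet_singleton 0)) measurable_const
      ((hf_meas k).div hsum_meas)
  · intro x k
    unfold optimalCritic
    split
    · positivity
    · exact div_nonneg (hf_nonneg k x) (Finset.sum_nonneg fun j _ => hf_nonneg j x)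
  · intro x
    by_cases hs : (∑ j, f j x) = 0
    · simp only [optimalCritic, hs, if_pos, Finset.sum_const, Finset.card_univ,
        Fintype.card_fin, nsmul_eq_mul]
      exact mul_inv_cancel₀ (Nat.cast_ne_zero.mpr (by omega))
    · simp only [optimalCritic, if_neg hs, ← Finset.sum_div]
      exact div_self hs
  · unfold negCriticObjective negOptimalValue
    apply Finset.sum_congr rfl
    intro k _
    apply lintegral_congr
    intro x
    by_cases hfk : f k x = 0
    · simp [hfk]
    · have hsk : f k x ≤ ∑ j, f j x :=
        Finset.single_le_sum (fun j _ => hf_nonneg j x) (Finset.mem_univ k)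
      have hs : (∑ j, f j x) ≠ 0 :=
        fun h => hfk (le_antisymm (h ▸ hsk) (hf_nonneg k x))
      have hopt : optimalCritic f x k = f k x / ∑ j, f j x := by
        simp [optimalCritic, hs]
      have hne : optimalCritic f x k ≠ 0 := by
        rw [hopt]; exact div_ne_zero hfk hs
      rw [if_neg hfk, if_neg hfk, if_neg hne, if_neg hs, hopt]
end

section
/- Let (X, 𝒜, μ) be a σ-finite measure space and let p₁, p₂, p₃, p₄, p₅ be probability measures on X with densities with respect to μ. Define V(p₁,…,p₅) := sup over measurable critics g : X → Δ⁴ (5-class probability-simplex-valued) of Σ_{k=1}^{5} E_{pₖ}[log g(x)ₖ]. Then V(p₁,…,p₅) ≥ −5·log 5, and V(p₁,…,p₅) = −5·log 5 if and only if p₁ = p₂ = p₃ = p₄ = p₅. Consequently, if p₅ is held fixed and (p₁, p₂, p₃, p₄) range over probability measures with densities with respect to μ, the minimax value min over (p₁,…,p₄) of V is attained exactly at p₁ = p₂ = p₃ = p₄ = p₅. -/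
open MeasureTheory
open scoped ENNReal BigOperators

/-- The extended negative logarithm `t ↦ -log t` as a map `ℝ → ℝ≥0∞`, with
`-log 0 = ∞`. -/
noncomputable def negLog (t : ℝ) : ℝ≥0∞ :=
  if t = 0 then ⊤ else ENNReal.ofReal (-Real.log t)

/-- The critic objective `∑ₖ E_{pₖ}[log g(x)ₖ]` for a simplex-valued critic `g`, as an
extended real number.  Since `g(x)ₖ ∈ [0,1]`, each expectation is nonpositive and the
objective is computed as minus a sum of lower integrals (with `log 0 = -∞`). -/
noncomputable def criticObjective {X : Type*} [MeasurableSpace X] {n : ℕ}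
    (p : Fin n → Measure X) (g : X → Fin n → ℝ) : EReal :=
  -(((∑ k, ∫⁻ x, negLog (g x k) ∂(p k)) : ℝ≥0∞) : EReal)

/-- The optimal-critic value `V(p₁,…,pₙ)`: the supremum over all measurable
simplex-valued critics `g : X → Δⁿ⁻¹` of `∑ₖ E_{pₖ}[log g(x)ₖ]`. -/
noncomputable def criticValue {X : Type*} [MeasurableSpace X] {n : ℕ}
    (p : Fin n → Measure X) : EReal :=
  ⨆ g : {g : X → Fin n → ℝ // Measurable g ∧ (∀ x k, 0 ≤ g x k) ∧
      ∀ x, ∑ k, g x k = 1}, criticObjective p g.1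

lemma measurable_negLog : Measurable negLog := by
  unfold negLog
  exact Measurable.ite (measurableSet_eq) measurable_const
    (Real.measurable_log.neg.ennreal_ofReal)

lemma neg_coe_ofReal (r : ℝ) (hr : 0 ≤ r) :
    -(((ENNReal.ofReal r) : ℝ≥0∞) : EReal) = ((-r : ℝ) : EReal) := by
  rw [EReal.coe_ennreal_ofReal, sup_eq_left.mpr hr]
  exact (EReal.coe_neg r).symm

lemma negLog_fifth : negLog (5⁻¹ : ℝ) = ENNReal.ofReal (Real.log 5) := by
  rw [negLog, if_neg (by norm_num), Real.log_inv, neg_neg]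

-- lower bound

lemma criticValue_ge {X : Type*} [MeasurableSpace X] (p : Fin 5 → Measure X)
    (hp : ∀ k, IsProbabilityMeasure (p k)) :
    ((-(5 * Real.log 5) : ℝ) : EReal) ≤ criticValue p := by
  have hmem : Measurable (fun (_ : X) (_ : Fin 5) => (5:ℝ)⁻¹) ∧
      (∀ (x : X) (k : Fin 5), 0 ≤ (5:ℝ)⁻¹) ∧
      (∀ _ : X, ∑ _k : Fin 5, (5:ℝ)⁻¹ = 1) :=
    ⟨measurable_const, fun _ _ => by norm_num, fun _ => by
      simp [Finset.sum_const]⟩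
  unfold criticValue
  refine le_trans (le_of_eq ?_) (le_iSup _ ⟨_, hmem⟩)
  have : ∀ k : Fin 5, ∫⁻ _x : X, negLog ((5:ℝ)⁻¹) ∂(p k) = ENNReal.ofReal (Real.log 5) := by
    intro k
    have := hp k
    rw [lintegral_const, measure_univ, mul_one, negLog_fifth]
  simp only [criticObjective, this, Finset.sum_const, Finset.card_univ, Fintype.card_fin]
  rw [show (5 : ℕ) • ENNReal.ofReal (Real.log 5) = ENNReal.ofReal (5 * Real.log 5) by
    rw [ENNReal.ofReal_mul (by norm_num)]
    simp [nsmul_eq_mul]]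
  rw [neg_coe_ofReal]
  exact mul_nonneg (by norm_num) (Real.log_nonneg (by norm_num))

-- pointwise bound

lemma sum_negLog_ge (g : Fin 5 → ℝ) (h0 : ∀ k, 0 ≤ g k) (h1 : ∑ k, g k = 1) :
    ENNReal.ofReal (5 * Real.log 5) ≤ ∑ k, negLog (g k) := by
  by_cases hz : ∃ k, g k = 0
  · obtain ⟨k, hk⟩ := hz
    refine le_trans le_top (le_trans (le_of_eq ?_) (Finset.single_le_sum
      (f := fun k => negLog (g k)) (fun _ _ => zero_le) (Finset.mem_univ k)))
    simp [negLog, hk]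
  · push_neg at hz
    have hpos : ∀ k, 0 < g k := fun k => lt_of_le_of_ne (h0 k) (Ne.symm (hz k))
    have hle1 : ∀ k, g k ≤ 1 := by
      intro k
      rw [← h1]
      exact Finset.single_le_sum (fun i _ => h0 i) (Finset.mem_univ k)
    have hlnn : ∀ k, 0 ≤ -Real.log (g k) := by
      intro k
      simp only [neg_nonneg]
      exact Real.log_nonpos (h0 k) (hle1 k)
    have heq : ∀ k, negLog (g k) = ENNReal.ofReal (-Real.log (g k)) := fun k => by
      simp [negLog, (hpos k).ne']
    simp only [heq]
    rw [← ENNReal.ofReal_sum_of_nonneg (fun k _ => hlnn k)]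
    apply ENNReal.ofReal_le_ofReal
    -- 5 log 5 ≤ ∑ -log g k, from log (g k) ≤ 5 g k - 1 - log 5
    have tangent : ∀ k, Real.log 5 - (5 * g k - 1) ≤ -Real.log (g k) := by
      intro k
      have h5 : Real.log (5 * g k) ≤ 5 * g k - 1 :=
        Real.log_le_sub_one_of_pos (mul_pos (by norm_num) (hpos k))
      rw [Real.log_mul (by norm_num) (hpos k).ne'] at h5
      linarith
    calc 5 * Real.log 5 = ∑ k : Fin 5, (Real.log 5 - (5 * g k - 1)) := by
          rw [Finset.sum_sub_distrib, Finset.sum_const, Finset.sum_sub_distrib,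
            ← Finset.mul_sum, h1]
          simp
      _ ≤ ∑ k, -Real.log (g k) := Finset.sum_le_sum fun k _ => tangent k

-- upper bound for equal measures

lemma criticValue_const_le {X : Type*} [MeasurableSpace X] (ν : Measure X)
    (hν : IsProbabilityMeasure ν) :
    criticValue (fun _ : Fin 5 => ν) ≤ ((-(5 * Real.log 5) : ℝ) : EReal) := by
  refine iSup_le ?_
  rintro ⟨g, hgm, hg0, hg1⟩
  have hmk : ∀ k : Fin 5, Measurable fun x => negLog (g x k) :=
    fun k => measurable_negLog.comp ((measurable_pi_apply k).comp hgm)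
  have hS : ENNReal.ofReal (5 * Real.log 5) ≤ ∑ k, ∫⁻ x, negLog (g x k) ∂ν := by
    rw [← lintegral_finset_sum _ (fun k _ => hmk k)]
    calc ENNReal.ofReal (5 * Real.log 5)
        = ∫⁻ _x, ENNReal.ofReal (5 * Real.log 5) ∂ν := by
          rw [lintegral_const, measure_univ, mul_one]
      _ ≤ _ := lintegral_mono fun x => sum_negLog_ge _ (hg0 x) (hg1 x)
  show -(((∑ k, ∫⁻ x, negLog (g x k) ∂ν) : ℝ≥0∞) : EReal) ≤ _
  rw [← neg_coe_ofReal (5 * Real.log 5) (mul_nonneg (by norm_num) (Real.log_nonneg (by norm_num)))]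
  exact EReal.neg_le_neg_iff.mpr (EReal.coe_ennreal_le_coe_ennreal_iff.mpr hS)

lemma key_ineq (u : ℝ) (hu : u ≠ 0) (h1 : |u| ≤ 1/2) :
    0 < (1+2*u) * Real.log (1+u) + (1-2*u) * Real.log (1-u) := by
  have hb := abs_le.mp h1
  have h1p : (0:ℝ) < 1 + u := by linarith [hb.1]
  have h1m : (0:ℝ) < 1 - u := by linarith [hb.2]
  have b1 := Real.log_le_sub_one_of_pos (inv_pos.mpr h1p)
  have b2 := Real.log_le_sub_one_of_pos (inv_pos.mpr h1m)
  rw [Real.log_inv] at b1 b2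
  set L1 := Real.log (1+u)
  set L2 := Real.log (1-u)
  have mu1 : u ≤ L1 * (1+u) := by
    have := mul_le_mul_of_nonneg_right b1 h1p.le
    rw [sub_mul, inv_mul_cancel₀ h1p.ne'] at this
    nlinarith
  have mu2 : -u ≤ L2 * (1-u) := by
    have := mul_le_mul_of_nonneg_right b2 h1m.le
    rw [sub_mul, inv_mul_cancel₀ h1m.ne'] at this
    nlinarith
  have c1 : (0:ℝ) ≤ (1+2*u)*(1-u) := by nlinarith [hb.1, hb.2]
  have c2 : (0:ℝ) ≤ (1-2*u)*(1+u) := by nlinarith [hb.1, hb.2]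
  have e1 := mul_le_mul_of_nonneg_left mu1 c1
  have e2 := mul_le_mul_of_nonneg_left mu2 c2
  have hsum : 2*u^2 ≤ (1-u^2) * ((1+2*u)*L1 + (1-2*u)*L2) := by nlinarith [e1, e2]
  have hu2 : 0 < u^2 := by positivity
  have h1mu2 : 0 < 1 - u^2 := by nlinarith
  nlinarith [hsum]

lemma criticValue_strict {X : Type*} [MeasurableSpace X] (p : Fin 5 → Measure X)
    (hp : ∀ k, IsProbabilityMeasure (p k)) (j : Fin 5) (hj : p j ≠ p 4) :
    ((-(5 * Real.log 5) : ℝ) : EReal) < criticValue p := by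
  classical
  obtain ⟨A, hA, hAne⟩ : ∃ A, MeasurableSet A ∧ p j A ≠ p 4 A := by
    by_contra h
    push_neg at h
    exact hj (Measure.ext fun s hs => h s hs)
  have hjne4 : j ≠ 4 := fun h => hj (by rw [h])
  obtain ⟨t, ht⟩ : ∃ t : Fin 5 → ℝ, t = fun k => ((p k) A).toReal := ⟨_, rfl⟩
  have ht0 : ∀ k, 0 ≤ t k := by intro k; rw [ht]; exact ENNReal.toReal_nonneg
  have ht1 : ∀ k, t k ≤ 1 := by
    intro k
    have := hp k
    have h1 : p k A ≤ 1 := prob_le_one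
    rw [ht]
    exact ENNReal.toReal_le_of_le_ofReal zero_le_one (by simpa using h1)
  have htne : t j ≠ t 4 := by
    intro h
    rw [ht] at h
    exact hAne ((ENNReal.toReal_eq_toReal_iff' (measure_ne_top _ _) (measure_ne_top _ _)).mp h)
  obtain ⟨ε, hε⟩ : ∃ ε : ℝ, ε = (t j - t 4) / 10 := ⟨_, rfl⟩
  obtain ⟨u, hu⟩ : ∃ u : ℝ, u = (t j - t 4) / 2 := ⟨_, rfl⟩
  have hune : u ≠ 0 := by
    rw [hu]
    exact div_ne_zero (sub_ne_zero.mpr htne) (by norm_num)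
  have huabs : |u| ≤ 1/2 := by
    rw [abs_le, hu]
    constructor <;> nlinarith [ht0 j, ht1 j, ht0 4, ht1 4]
  have hεb : -(1/10) ≤ ε ∧ ε ≤ 1/10 := by
    rw [hε]
    constructor <;> nlinarith [ht0 j, ht1 j, ht0 4, ht1 4]
  obtain ⟨a, hadef⟩ : ∃ a : Fin 5 → ℝ,
      a = fun k => 1/5 + (if k = j then ε else 0) - (if k = 4 then ε else 0) := ⟨_, rfl⟩
  obtain ⟨b, hbdef⟩ : ∃ b : Fin 5 → ℝ,
      b = fun k => 1/5 - (if k = j then ε else 0) + (if k = 4 then ε else 0) := ⟨_, rfl⟩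
  have hab : ∀ k, (1/10 ≤ a k ∧ a k ≤ 3/10) ∧ (1/10 ≤ b k ∧ b k ≤ 3/10) := by
    intro k
    rw [hadef, hbdef]
    simp only
    split_ifs <;> constructor <;> constructor <;> linarith [hεb.1, hεb.2]
  have haj : a j = 1/5 + ε := by rw [hadef]; simp [hjne4]
  have ha4 : a 4 = 1/5 - ε := by rw [hadef]; simp [Ne.symm hjne4]
  have hbj : b j = 1/5 - ε := by rw [hbdef]; simp [hjne4]
  have hb4 : b 4 = 1/5 + ε := by rw [hbdef]; simp [Ne.symm hjne4]
  have hao : ∀ k, k ≠ j → k ≠ 4 → a k = 1/5 := by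
    intro k h1 h2; rw [hadef]; simp [h1, h2]
  have hbo : ∀ k, k ≠ j → k ≠ 4 → b k = 1/5 := by
    intro k h1 h2; rw [hbdef]; simp [h1, h2]
  have hsa : ∑ k, a k = 1 := by
    rw [hadef]
    rw [Finset.sum_sub_distrib, Finset.sum_add_distrib, Finset.sum_ite_eq',
      Finset.sum_ite_eq', Finset.sum_const]
    simp
  have hsb : ∑ k, b k = 1 := by
    rw [hbdef]
    rw [Finset.sum_add_distrib, Finset.sum_sub_distrib, Finset.sum_ite_eq',
      Finset.sum_ite_eq', Finset.sum_const]
    simp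
  obtain ⟨g, hgdef⟩ : ∃ g : X → Fin 5 → ℝ,
      g = A.piecewise (fun _ => a) (fun _ => b) := ⟨_, rfl⟩
  have hgA : ∀ x ∈ A, g x = a := by
    intro x hx; rw [hgdef, Set.piecewise_eq_of_mem _ _ _ hx]
  have hgAc : ∀ x ∉ A, g x = b := by
    intro x hx; rw [hgdef, Set.piecewise_eq_of_notMem _ _ _ hx]
  have hgm : Measurable g := by
    rw [hgdef]; exact Measurable.piecewise hA measurable_const measurable_const
  have hgmem : Measurable g ∧ (∀ x k, 0 ≤ g x k) ∧ ∀ x, ∑ k, g x k = 1 := by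
    refine ⟨hgm, ?_, ?_⟩
    · intro x k
      by_cases hx : x ∈ A
      · rw [hgA x hx]; linarith [(hab k).1.1]
      · rw [hgAc x hx]; linarith [(hab k).2.1]
    · intro x
      by_cases hx : x ∈ A
      · rw [hgA x hx]; exact hsa
      · rw [hgAc x hx]; exact hsb
  have hla : ∀ k, 0 ≤ -Real.log (a k) := by
    intro k
    simp only [neg_nonneg]
    exact Real.log_nonpos (by linarith [(hab k).1.1]) (by linarith [(hab k).1.2])
  have hlb : ∀ k, 0 ≤ -Real.log (b k) := by
    intro k
    simp only [neg_nonneg]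
    exact Real.log_nonpos (by linarith [(hab k).2.1]) (by linarith [(hab k).2.2])
  have hint : ∀ k : Fin 5, ∫⁻ x, negLog (g x k) ∂(p k)
      = ENNReal.ofReal ((-Real.log (a k)) * t k + (-Real.log (b k)) * (1 - t k)) := by
    intro k
    have := hp k
    have hak : a k ≠ 0 := by have := (hab k).1.1; intro h; rw [h] at this; linarith
    have hbk : b k ≠ 0 := by have := (hab k).2.1; intro h; rw [h] at this; linarith
    rw [← lintegral_add_compl (fun x => negLog (g x k)) hA]
    have hA1 : ∫⁻ x in A, negLog (g x k) ∂(p k) = negLog (a k) * p k A := by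
      have hcong : ∀ᵐ x ∂(p k), x ∈ A → negLog (g x k) = (fun _ : X => negLog (a k)) x :=
        ae_of_all _ fun x hx => by rw [hgA x hx]
      rw [setLIntegral_congr_fun_ae hA hcong, setLIntegral_const]
    have hA2 : ∫⁻ x in Aᶜ, negLog (g x k) ∂(p k) = negLog (b k) * p k Aᶜ := by
      have hcong : ∀ᵐ x ∂(p k), x ∈ Aᶜ → negLog (g x k) = (fun _ : X => negLog (b k)) x :=
        ae_of_all _ fun x hx => by rw [hgAc x ((Set.mem_compl_iff _ _).mp hx)]
      rw [setLIntegral_congr_fun_ae hA.compl hcong, setLIntegral_const]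
    rw [hA1, hA2]
    have hpA : p k A = ENNReal.ofReal (t k) := by
      rw [ht]; exact (ENNReal.ofReal_toReal (measure_ne_top _ _)).symm
    have hpAc : p k Aᶜ = ENNReal.ofReal (1 - t k) := by
      rw [prob_compl_eq_one_sub hA, hpA, ENNReal.ofReal_sub _ (ht0 k), ENNReal.ofReal_one]
    rw [hpA, hpAc, negLog, if_neg hak, negLog, if_neg hbk,
      ← ENNReal.ofReal_mul (hla k), ← ENNReal.ofReal_mul (hlb k),
      ← ENNReal.ofReal_add (mul_nonneg (hla k) (ht0 k))
        (mul_nonneg (hlb k) (by linarith [ht1 k]))]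
  obtain ⟨F, hFdef⟩ : ∃ F : Fin 5 → ℝ,
      F = fun k => (-Real.log (a k)) * t k + (-Real.log (b k)) * (1 - t k) := ⟨_, rfl⟩
  have hFnn : ∀ k, 0 ≤ F k := by
    intro k
    rw [hFdef]
    exact add_nonneg (mul_nonneg (hla k) (ht0 k)) (mul_nonneg (hlb k) (by linarith [ht1 k]))
  have hobj : criticObjective p g = ((-(∑ k, F k) : ℝ) : EReal) := by
    rw [criticObjective]
    have : ∀ k : Fin 5, ∫⁻ x, negLog (g x k) ∂(p k) = ENNReal.ofReal (F k) := by
      intro k; rw [hint k, hFdef]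
    simp only [this]
    rw [← ENNReal.ofReal_sum_of_nonneg (fun k _ => hFnn k)]
    exact neg_coe_ofReal _ (Finset.sum_nonneg fun k _ => hFnn k)
  obtain ⟨Dj, hDj⟩ : ∃ D : ℝ,
      D = (-Real.log (1/5+ε)) * t j + (-Real.log (1/5-ε)) * (1 - t j) - Real.log 5 := ⟨_, rfl⟩
  obtain ⟨D4, hD4⟩ : ∃ D : ℝ,
      D = (-Real.log (1/5-ε)) * t 4 + (-Real.log (1/5+ε)) * (1 - t 4) - Real.log 5 := ⟨_, rfl⟩
  have hFk : ∀ k, F k = Real.log 5 + ((if k = j then Dj else 0) + (if k = 4 then D4 else 0)) := by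
    intro k
    by_cases hkj : k = j
    · subst hkj
      rw [hFdef]
      simp only [haj, hbj, if_pos rfl, if_neg hjne4, hDj, if_true]
      ring
    · by_cases hk4 : k = 4
      · subst hk4
        rw [hFdef]
        simp only [ha4, hb4, if_neg hkj, if_pos rfl, hD4, if_true]
        ring
      · rw [hFdef]
        simp only [hao k hkj hk4, hbo k hkj hk4, if_neg hkj, if_neg hk4]
        rw [show (1:ℝ)/5 = 5⁻¹ by norm_num, Real.log_inv]
        ring
  have hsumF : ∑ k, F k = 5 * Real.log 5 + (Dj + D4) := by
    simp only [hFk]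
    rw [Finset.sum_add_distrib, Finset.sum_add_distrib, Finset.sum_ite_eq',
      Finset.sum_ite_eq', Finset.sum_const]
    simp only [Finset.card_univ, Fintype.card_fin, Finset.mem_univ, if_true, nsmul_eq_mul]
    push_cast
    ring
  have hDneg : Dj + D4 < 0 := by
    have hb := abs_le.mp huabs
    have h1p : (0:ℝ) < 1 + u := by linarith
    have h1m : (0:ℝ) < 1 - u := by linarith
    have e1 : (1:ℝ)/5 + ε = (1+u)/5 := by rw [hε, hu]; ring
    have e2 : (1:ℝ)/5 - ε = (1-u)/5 := by rw [hε, hu]; ring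
    have l1 : Real.log (1/5+ε) = Real.log (1+u) - Real.log 5 := by
      rw [e1, Real.log_div h1p.ne' (by norm_num)]
    have l2 : Real.log (1/5-ε) = Real.log (1-u) - Real.log 5 := by
      rw [e2, Real.log_div h1m.ne' (by norm_num)]
    have key := key_ineq u hune huabs
    have htj4 : t j - t 4 = 2 * u := by rw [hu]; ring
    have heq : Dj + D4 = -((1+2*u)*Real.log (1+u) + (1-2*u)*Real.log (1-u)) := by
      rw [hDj, hD4, l1, l2]
      linear_combination (Real.log (1-u) - Real.log (1+u)) * htj4
    rw [heq]
    linarith [key]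
  calc ((-(5 * Real.log 5) : ℝ) : EReal) < ((-(∑ k, F k) : ℝ) : EReal) := by
        rw [EReal.coe_lt_coe_iff, hsumF]; linarith
    _ = criticObjective p g := hobj.symm
    _ ≤ criticValue p := by
        unfold criticValue
        exact le_iSup (fun g' : {g' : X → Fin 5 → ℝ // Measurable g' ∧
          (∀ x k, 0 ≤ g' x k) ∧ ∀ x, ∑ k, g' x k = 1} =>
            criticObjective p g'.1) ⟨g, hgmem⟩

/-- Proposition 1 of JointGAN, at the level of distributions: for probability measures
`p₁, …, p₅` having densities with respect to a common σ-finite measure `μ`, the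
optimal-critic value `V(p₁,…,p₅) = sup_g ∑ₖ E_{pₖ}[log g(x)ₖ]` over 5-class softmax
critics satisfies `V ≥ -5 log 5`, with equality iff `p₁ = p₂ = p₃ = p₄ = p₅`.
Consequently, holding `p₅` fixed, the minimum over `(p₁, p₂, p₃, p₄)` (ranging over
probability measures with densities w.r.t. `μ`) of `V` equals `-5 log 5` and is attained
exactly at `p₁ = p₂ = p₃ = p₄ = p₅`. -/
theorem jointGAN_equilibrium {X : Type*} [MeasurableSpace X] (μ : Measure X)
    [SigmaFinite μ] (p : Fin 5 → Measure X)
    (hprob : ∀ k, IsProbabilityMeasure (p k))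
    (hdens : ∀ k, ∃ f : X → ℝ≥0∞, Measurable f ∧ p k = μ.withDensity f) :
    ((-(5 * Real.log 5) : ℝ) : EReal) ≤ criticValue p ∧
    (criticValue p = ((-(5 * Real.log 5) : ℝ) : EReal) ↔ ∀ k, p k = p 4) ∧
    criticValue (fun _ : Fin 5 => p 4) = ((-(5 * Real.log 5) : ℝ) : EReal) ∧
    (∀ q : Fin 5 → Measure X, (∀ k, IsProbabilityMeasure (q k)) →
      (∀ k, ∃ f : X → ℝ≥0∞, Measurable f ∧ q k = μ.withDensity f) →
      q 4 = p 4 →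
      criticValue (fun _ : Fin 5 => p 4) ≤ criticValue q ∧
      (criticValue q = criticValue (fun _ : Fin 5 => p 4) ↔ ∀ k, q k = p 4)) := by
  have hlow := criticValue_ge p hprob
  have hiff : ∀ (r : Fin 5 → Measure X), (∀ k, IsProbabilityMeasure (r k)) →
      (criticValue r = ((-(5 * Real.log 5) : ℝ) : EReal) ↔ ∀ k, r k = r 4) := by
    intro r hr
    constructor
    · intro hval k
      by_contra hne
      exact absurd hval (ne_of_gt (criticValue_strict r hr k hne))
    · intro hall
      have hconst : r = fun _ => r 4 := funext hall
      rw [hconst]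
      exact le_antisymm (criticValue_const_le (r 4) (hr 4))
        (criticValue_ge _ (fun _ => hr 4))
  have hconst : criticValue (fun _ : Fin 5 => p 4) = ((-(5 * Real.log 5) : ℝ) : EReal) :=
    le_antisymm (criticValue_const_le (p 4) (hprob 4)) (criticValue_ge _ (fun _ => hprob 4))
  refine ⟨hlow, hiff p hprob, hconst, ?_⟩
  intro q hq _hqd hq4
  constructor
  · rw [hconst]
    exact criticValue_ge q hq
  · rw [hconst, ← hq4]
    exact hiff q hq
end

section
/- Let (X, 𝒜, μ) be a σ-finite measure space, let n ≥ 1, and let p₁, …, pₙ be probability measures on X with densities with respect to μ. Define V(p₁,…,pₙ) := sup over measurable critics g : X → Δⁿ⁻¹ of Σ_{k=1}^{n} E_{pₖ}[log g(x)ₖ]. Then V(p₁,…,pₙ) ≥ −n·log n, with equality if and only if p₁ = p₂ = ⋯ = pₙ. -/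
open MeasureTheory
open scoped ENNReal BigOperators

lemma negLog_of_pos {t : ℝ} (ht : 0 < t) : negLog t = ENNReal.ofReal (-Real.log t) :=
  if_neg (ne_of_gt ht)

lemma pointwise_bound {n : ℕ} (hn : 1 ≤ n) (g : Fin n → ℝ) (h0 : ∀ k, 0 ≤ g k)
    (h1 : ∑ k, g k = 1) :
    ENNReal.ofReal (n * Real.log n) ≤ ∑ k, negLog (g k) := by
  by_cases hz : ∃ k, g k = 0
  · obtain ⟨k, hk⟩ := hz
    have htop : ∑ k, negLog (g k) = ⊤ :=
      ENNReal.sum_eq_top.2 ⟨k, Finset.mem_univ k, by simp [negLog, hk]⟩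
    simp [htop]
  · push_neg at hz
    have hpos : ∀ k, 0 < g k := fun k => lt_of_le_of_ne (h0 k) (Ne.symm (hz k))
    have hle1 : ∀ k, g k ≤ 1 := by
      intro k
      rw [← h1]
      exact Finset.single_le_sum (fun i _ => h0 i) (Finset.mem_univ k)
    have hlognn : ∀ k, 0 ≤ -Real.log (g k) := by
      intro k
      simp only [neg_nonneg]
      exact Real.log_nonpos (h0 k) (hle1 k)
    have hrw : ∑ k, negLog (g k) = ENNReal.ofReal (∑ k, -Real.log (g k)) := by
      rw [ENNReal.ofReal_sum_of_nonneg (fun k _ => hlognn k)]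
      exact Finset.sum_congr rfl fun k _ => negLog_of_pos (hpos k)
    rw [hrw]
    apply ENNReal.ofReal_le_ofReal
    have npos : (0:ℝ) < n := by exact_mod_cast hn
    have key : ∀ k, Real.log n + Real.log (g k) ≤ (n:ℝ) * g k - 1 := by
      intro k
      have h := Real.log_le_sub_one_of_pos (mul_pos npos (hpos k))
      rwa [Real.log_mul (ne_of_gt npos) (ne_of_gt (hpos k))] at h
    have hsum := Finset.sum_le_sum (fun k (_ : k ∈ Finset.univ) => key k)
    simp only [Finset.sum_add_distrib, Finset.sum_sub_distrib, Finset.sum_const,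
      Finset.card_univ, Fintype.card_fin, nsmul_eq_mul, ← Finset.mul_sum, h1,
      Finset.sum_neg_distrib] at hsum ⊢
    linarith

lemma keyReal {e : ℝ} (he : 0 < e) (he1 : e < 1) :
    0 < (1+2*e) * Real.log (1+e) + (1-2*e) * Real.log (1-e) := by
  have h1 : (0:ℝ) < 1 + e := by linarith
  have h2 : (0:ℝ) < 1 - e := by linarith
  have hA0 : Real.log ((1+e)⁻¹) ≤ (1+e)⁻¹ - 1 :=
    Real.log_le_sub_one_of_pos (by positivity)
  have hB0 : Real.log ((1-e)⁻¹) ≤ (1-e)⁻¹ - 1 :=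
    Real.log_le_sub_one_of_pos (by positivity)
  rw [Real.log_inv] at hA0 hB0
  have h1' : (1+e) * (1+e)⁻¹ = 1 := mul_inv_cancel₀ (ne_of_gt h1)
  have h2' : (1-e) * (1-e)⁻¹ = 1 := mul_inv_cancel₀ (ne_of_gt h2)
  have hA' : e ≤ (1+e) * Real.log (1+e) := by nlinarith
  have hB' : -e ≤ (1-e) * Real.log (1-e) := by nlinarith
  have hC : Real.log (1-e) < Real.log (1+e) := Real.log_lt_log h2 (by linarith)
  nlinarith [mul_pos he (sub_pos.mpr hC)]

lemma bound_coe {n : ℕ} (hn : 1 ≤ n) :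
    ((-((n:ℝ) * Real.log n) : ℝ) : EReal)
      = -((ENNReal.ofReal ((n:ℝ) * Real.log n) : ℝ≥0∞) : EReal) := by
  have hnn : 0 ≤ (n:ℝ) * Real.log n :=
    mul_nonneg (Nat.cast_nonneg n) (Real.log_nonneg (by exact_mod_cast hn))
  rw [EReal.coe_ennreal_ofReal, sup_of_le_left hnn, EReal.coe_neg]

lemma lower_bound {X : Type*} [MeasurableSpace X] {n : ℕ} (hn : 1 ≤ n)
    (p : Fin n → Measure X) (hprob : ∀ k, IsProbabilityMeasure (p k)) :
    ((-((n:ℝ) * Real.log n) : ℝ) : EReal) ≤ criticValue p := by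
  have npos : (0:ℝ) < n := by exact_mod_cast hn
  set g : X → Fin n → ℝ := fun _ _ => (n:ℝ)⁻¹ with hg
  have hmem : Measurable g ∧ (∀ x k, 0 ≤ g x k) ∧ ∀ x, ∑ k : Fin n, g x k = 1 := by
    refine ⟨measurable_const, fun x k => by positivity, fun x => ?_⟩
    simp [hg, Finset.card_univ, mul_inv_cancel₀ (ne_of_gt npos)]
  have hobj : criticObjective p g = ((-((n:ℝ) * Real.log n) : ℝ) : EReal) := by
    have hint : ∀ k : Fin n, ∫⁻ x, negLog (g x k) ∂(p k) = ENNReal.ofReal (Real.log n) := by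
      intro k
      have := hprob k
      rw [hg]
      simp only [lintegral_const, measure_univ, mul_one]
      rw [negLog_of_pos (by positivity), Real.log_inv, neg_neg]
    rw [criticObjective]
    simp only [hint, Finset.sum_const, Finset.card_univ, Fintype.card_fin, nsmul_eq_mul]
    rw [bound_coe hn]
    congr 1
    rw [← ENNReal.ofReal_natCast n, ← ENNReal.ofReal_mul (Nat.cast_nonneg n)]
  rw [← hobj]
  exact le_iSup (fun g : {g : X → Fin n → ℝ // Measurable g ∧ (∀ x k, 0 ≤ g x k) ∧
      ∀ x, ∑ k, g x k = 1} => criticObjective p g.1) ⟨g, hmem⟩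

lemma upper_bound {X : Type*} [MeasurableSpace X] {n : ℕ} (hn : 1 ≤ n)
    (p : Fin n → Measure X) (hprob : ∀ k, IsProbabilityMeasure (p k))
    (hall : ∀ j k, p j = p k) :
    criticValue p ≤ ((-((n:ℝ) * Real.log n) : ℝ) : EReal) := by
  rw [criticValue]
  apply iSup_le
  rintro ⟨g, hmeas, h0, h1⟩
  rw [bound_coe hn, criticObjective, EReal.neg_le_neg_iff, EReal.coe_ennreal_le_coe_ennreal_iff]
  have i0 : Fin n := ⟨0, hn⟩
  have hrw : ∀ k : Fin n, ∫⁻ x, negLog (g x k) ∂(p k) = ∫⁻ x, negLog (g x k) ∂(p i0) := by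
    intro k; rw [hall k i0]
  calc ENNReal.ofReal ((n:ℝ) * Real.log n)
      ≤ ∫⁻ x, ∑ k, negLog (g x k) ∂(p i0) := by
        have := hprob i0
        calc ENNReal.ofReal ((n:ℝ) * Real.log n)
            = ∫⁻ _, ENNReal.ofReal ((n:ℝ) * Real.log n) ∂(p i0) := by
              simp [lintegral_const, measure_univ]
          _ ≤ _ := lintegral_mono fun x => pointwise_bound hn (g x) (h0 x) (h1 x)
    _ = ∑ k, ∫⁻ x, negLog (g x k) ∂(p i0) := by
        exact lintegral_finset_sum' _ fun k _ =>
          (measurable_negLog.comp ((measurable_pi_apply k).comp hmeas)).aemeasurable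
    _ = ∑ k, ∫⁻ x, negLog (g x k) ∂(p k) := by
        exact Finset.sum_congr rfl fun k _ => (hrw k).symm

lemma strict_gain {X : Type*} [MeasurableSpace X] {n : ℕ} (p : Fin n → Measure X)
    (hprob : ∀ k, IsProbabilityMeasure (p k)) {j k : Fin n} {s : Set X}
    (hs : MeasurableSet s) (hlt : (p k s).toReal < (p j s).toReal) :
    ((-((n:ℝ) * Real.log n) : ℝ) : EReal) < criticValue p := by
  classical
  set q : Fin n → ℝ := fun i => (p i s).toReal with hq
  have hq0 : ∀ i, 0 ≤ q i := fun i => ENNReal.toReal_nonneg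
  have hq1 : ∀ i, q i ≤ 1 := by
    intro i
    have h1 : p i s ≤ 1 := by have := hprob i; exact prob_le_one
    simpa using ENNReal.toReal_mono (by norm_num) h1
  have hjk : j ≠ k := by rintro rfl; exact lt_irrefl _ hlt
  have hn2 : 1 < n := by
    have : Nontrivial (Fin n) := ⟨⟨j, k, hjk⟩⟩
    simpa using Fintype.one_lt_card (α := Fin n)
  have hn2' : (2:ℝ) ≤ n := by exact_mod_cast hn2
  have npos : (0:ℝ) < n := by linarith
  have hn1 : (1:ℝ) < n := by linarith
  set e : ℝ := (q j - q k) / 2 with he_def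
  have he : 0 < e := by simp only [he_def]; simp only [hq]; linarith
  have he1 : e < 1 := by
    have h1 := hq1 j; have h2 := hq0 k
    simp only [he_def]; linarith
  set ta : Fin n → ℝ := fun i => if i = j then 1+e else if i = k then 1-e else 1 with hta
  set tb : Fin n → ℝ := fun i => if i = j then 1-e else if i = k then 1+e else 1 with htb
  set a : Fin n → ℝ := fun i => ta i / n with haa
  set b : Fin n → ℝ := fun i => tb i / n with hbb
  have hta_pos : ∀ i, 0 < ta i := by
    intro i; simp only [hta]; split_ifs <;> linarith
  have htb_pos : ∀ i, 0 < tb i := by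
    intro i; simp only [htb]; split_ifs <;> linarith
  have hta_le : ∀ i, ta i ≤ n := by
    intro i; simp only [hta]; split_ifs <;> linarith
  have htb_le : ∀ i, tb i ≤ n := by
    intro i; simp only [htb]; split_ifs <;> linarith
  have ha_pos : ∀ i, 0 < a i := fun i => div_pos (hta_pos i) npos
  have hb_pos : ∀ i, 0 < b i := fun i => div_pos (htb_pos i) npos
  have ha_le1 : ∀ i, a i ≤ 1 := fun i => (div_le_one npos).2 (hta_le i)
  have hb_le1 : ∀ i, b i ≤ 1 := fun i => (div_le_one npos).2 (htb_le i)
  set g : X → Fin n → ℝ := s.piecewise (fun _ => a) (fun _ => b) with hgdef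
  have hsum_gen : ∀ u v : ℝ,
      ∑ i : Fin n, (if i = j then u else if i = k then v else 1) = n + (u - 1) + (v - 1) := by
    intro u v
    have hpt : ∀ i : Fin n, (if i = j then u else if i = k then v else 1)
        = 1 + (if i = j then u - 1 else 0) + (if i = k then v - 1 else 0) := by
      intro i
      rcases eq_or_ne i j with h1 | h1
      · subst h1; rw [if_pos rfl, if_pos rfl, if_neg hjk]; ring
      · rcases eq_or_ne i k with h2 | h2
        · subst h2; rw [if_neg h1, if_pos rfl, if_neg h1, if_pos rfl]; ring
        · rw [if_neg h1, if_neg h2, if_neg h1, if_neg h2]; ring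
    simp only [hpt, Finset.sum_add_distrib, Finset.sum_const, Finset.card_univ,
      Fintype.card_fin, nsmul_eq_mul, mul_one, Finset.sum_ite_eq', Finset.mem_univ, if_true]
  have hsum_a : ∑ i, a i = 1 := by
    simp only [haa, ← Finset.sum_div, hta, hsum_gen]
    field_simp
    ring
  have hsum_b : ∑ i, b i = 1 := by
    simp only [hbb, ← Finset.sum_div, htb, hsum_gen]
    field_simp
    ring
  have hgs : ∀ x ∈ s, ∀ i, g x i = a i := by
    intro x hx i; simp [hgdef, Set.piecewise_eq_of_mem _ _ _ hx]
  have hgsc : ∀ x ∉ s, ∀ i, g x i = b i := by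
    intro x hx i; simp [hgdef, Set.piecewise_eq_of_notMem _ _ _ hx]
  have hmem : Measurable g ∧ (∀ x i, 0 ≤ g x i) ∧ ∀ x, ∑ i, g x i = 1 := by
    refine ⟨Measurable.piecewise hs measurable_const measurable_const, ?_, ?_⟩
    · intro x i
      by_cases hx : x ∈ s
      · rw [hgs x hx i]; exact (ha_pos i).le
      · rw [hgsc x hx i]; exact (hb_pos i).le
    · intro x
      by_cases hx : x ∈ s
      · rw [Finset.sum_congr rfl fun i _ => hgs x hx i]; exact hsum_a
      · rw [Finset.sum_congr rfl fun i _ => hgsc x hx i]; exact hsum_b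
  have hna : ∀ i, 0 ≤ -Real.log (a i) :=
    fun i => neg_nonneg.2 (Real.log_nonpos (ha_pos i).le (ha_le1 i))
  have hnb : ∀ i, 0 ≤ -Real.log (b i) :=
    fun i => neg_nonneg.2 (Real.log_nonpos (hb_pos i).le (hb_le1 i))
  have hint : ∀ i, ∫⁻ x, negLog (g x i) ∂(p i)
      = ENNReal.ofReal (q i * (-Real.log (a i)) + (1 - q i) * (-Real.log (b i))) := by
    intro i
    have := hprob i
    rw [← lintegral_add_compl (fun x => negLog (g x i)) hs]
    have h1 : ∫⁻ x in s, negLog (g x i) ∂(p i) = negLog (a i) * p i s := by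
      rw [setLIntegral_congr_fun hs (fun x hx => show negLog (g x i) = negLog (a i) by rw [hgs x hx i]),
        setLIntegral_const]
    have h2 : ∫⁻ x in sᶜ, negLog (g x i) ∂(p i) = negLog (b i) * p i sᶜ := by
      rw [setLIntegral_congr_fun hs.compl (fun x hx => show negLog (g x i) = negLog (b i) by rw [hgsc x hx i]),
        setLIntegral_const]
    rw [h1, h2, negLog_of_pos (ha_pos i), negLog_of_pos (hb_pos i)]
    have hps : p i s = ENNReal.ofReal (q i) := (ENNReal.ofReal_toReal (measure_ne_top _ _)).symm
    have hpsc : p i sᶜ = ENNReal.ofReal (1 - q i) := by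
      rw [prob_compl_eq_one_sub hs, hps, ENNReal.ofReal_sub _ (hq0 i), ENNReal.ofReal_one]
    rw [hps, hpsc, ← ENNReal.ofReal_mul (hna i), ← ENNReal.ofReal_mul (hnb i),
      ← ENNReal.ofReal_add (mul_nonneg (hna i) (hq0 i)) (mul_nonneg (hnb i) (by linarith [hq1 i]))]
    congr 1
    ring
  have hdivlog : ∀ u : ℝ, 0 < u → -Real.log (u / n) = Real.log n - Real.log u := by
    intro u hu
    rw [Real.log_div (ne_of_gt hu) (ne_of_gt npos)]
    ring
  have hla : ∀ i, -Real.log (a i) = Real.log n - Real.log (ta i) := by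
    intro i; simp only [haa]; exact hdivlog _ (hta_pos i)
  have hlb : ∀ i, -Real.log (b i) = Real.log n - Real.log (tb i) := by
    intro i; simp only [hbb]; exact hdivlog _ (htb_pos i)
  set B : ℝ := (1+2*e) * Real.log (1+e) + (1-2*e) * Real.log (1-e) with hB
  have hBpos : 0 < B := keyReal he he1
  have hVpt : ∀ i, q i * (-Real.log (a i)) + (1 - q i) * (-Real.log (b i))
      = Real.log n - ((if i = j then q j * Real.log (1+e) + (1 - q j) * Real.log (1-e) else 0)
        + (if i = k then q k * Real.log (1-e) + (1 - q k) * Real.log (1+e) else 0)) := by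
    intro i
    rw [hla i, hlb i]
    rcases eq_or_ne i j with h1 | h1
    · rw [if_pos h1, if_neg (h1 ▸ hjk)]
      have h2 : ta i = 1 + e := by simp [hta, h1]
      have h3 : tb i = 1 - e := by simp [htb, h1]
      rw [h2, h3, h1]; ring
    · rcases eq_or_ne i k with h2 | h2
      · rw [if_neg h1, if_pos h2]
        have h2' : ta i = 1 - e := by simp [hta, h1, h2, Ne.symm hjk]
        have h3' : tb i = 1 + e := by simp [htb, h1, h2, Ne.symm hjk]
        rw [h2', h3', h2]; ring
      · rw [if_neg h1, if_neg h2]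
        have h2' : ta i = 1 := by simp [hta, h1, h2]
        have h3' : tb i = 1 := by simp [htb, h1, h2]
        rw [h2', h3', Real.log_one]; ring
  have hRsum : ∑ i, (q i * (-Real.log (a i)) + (1 - q i) * (-Real.log (b i)))
      = (n:ℝ) * Real.log n - B := by
    simp only [hVpt, Finset.sum_sub_distrib, Finset.sum_const, Finset.card_univ,
      Fintype.card_fin, nsmul_eq_mul, Finset.sum_add_distrib, Finset.sum_ite_eq',
      Finset.mem_univ, if_true]
    have h2e : q j - q k = 2 * e := by rw [he_def]; ring
    rw [hB]
    linear_combination (Real.log (1-e) - Real.log (1+e)) * h2e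
  have hSsum : ∑ i, ∫⁻ x, negLog (g x i) ∂(p i)
      = ENNReal.ofReal ((n:ℝ) * Real.log n - B) := by
    rw [← hRsum, ENNReal.ofReal_sum_of_nonneg]
    · exact Finset.sum_congr rfl fun i _ => hint i
    · intro i _
      exact add_nonneg (mul_nonneg (hq0 i) (hna i))
        (mul_nonneg (by linarith [hq1 i]) (hnb i))
  have hobj_lt : ((-((n:ℝ) * Real.log n) : ℝ) : EReal) < criticObjective p g := by
    rw [bound_coe hn2.le, criticObjective, hSsum, EReal.neg_lt_neg_iff,
      EReal.coe_ennreal_lt_coe_ennreal_iff]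
    have hpos : (0:ℝ) < (n:ℝ) * Real.log n := mul_pos npos (Real.log_pos hn1)
    rw [ENNReal.ofReal_lt_ofReal_iff hpos]
    linarith
  refine hobj_lt.trans_le ?_
  exact le_iSup (fun g : {g : X → Fin n → ℝ // Measurable g ∧ (∀ x k, 0 ≤ g x k) ∧
      ∀ x, ∑ k, g x k = 1} => criticObjective p g.1) ⟨g, hmem⟩

/-- `n`-class JointGAN equilibrium characterization: for probability measures
`p₁, …, pₙ` having densities with respect to a common σ-finite measure `μ`, the
optimal-critic value `V(p₁,…,pₙ)` satisfies `V ≥ -n log n`, with equality iff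
`p₁ = p₂ = ⋯ = pₙ`. -/
theorem criticValue_ge_and_eq_iff {X : Type*} [MeasurableSpace X] (μ : Measure X)
    [SigmaFinite μ] (n : ℕ) (hn : 1 ≤ n)
    (p : Fin n → Measure X) (hprob : ∀ k, IsProbabilityMeasure (p k))
    (hdens : ∀ k, ∃ f : X → ℝ≥0∞, Measurable f ∧ p k = μ.withDensity f) :
    ((-(n * Real.log n) : ℝ) : EReal) ≤ criticValue p ∧
    (criticValue p = ((-(n * Real.log n) : ℝ) : EReal) ↔ ∀ j k, p j = p k) := by
  have hL := lower_bound hn p hprob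
  refine ⟨hL, ?_, ?_⟩
  · intro heq j k
    ext s hs
    by_contra hne
    have hfj : p j s ≠ ⊤ := measure_ne_top _ _
    have hfk : p k s ≠ ⊤ := measure_ne_top _ _
    have htne : (p j s).toReal ≠ (p k s).toReal := fun h =>
      hne ((ENNReal.toReal_eq_toReal_iff' hfj hfk).1 h)
    rcases htne.lt_or_gt with h | h
    · have := strict_gain (j := k) (k := j) p hprob hs h
      rw [heq] at this
      exact lt_irrefl _ this
    · have := strict_gain (j := j) (k := k) p hprob hs h
      rw [heq] at this
      exact lt_irrefl _ this
  · intro hall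
    exact le_antisymm (upper_bound hn p hprob hall) hL
end
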